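/- arXiv:math/0105199 — 5 statements merged into one kernel-verified Lean document; each statement's English description precedes it below -/
import Mathlib

section
/- Let $f, g : \mathbb{R} \to \mathbb{R}$ be continuously differentiable functions of period $1$, and let $R$ be a positive integer. Then $\left|\int_0^1 g(x) f(Rx)\,dx - \int_0^1 g(x)\,dx \int_0^1 f(x)\,dx\right| \le \frac{\|g'\|_\infty}{R} \int_0^1 |f(x)|\,dx$. -/
/-!
Let `H(y) = ∫₀^y f - y ∫₀¹ f`. Then `H` is `1`-periodic and bounded by `∫₀¹ |f|` (on `[0, 1]`
it is a convex combination of `∫₀^y f` and `-∫_y^1 f`), and `x ↦ H(Rx)/R` is a primitive of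
`f(Rx) - ∫₀¹ f`. Integrating by parts against `g`, the boundary terms vanish since
`H(R) = H(0) = 0`, leaving `-(1/R) ∫₀¹ g'(x) H(Rx) dx`, which is at most `(K/R) ∫₀¹ |f|`
in absolute value.
-/

open MeasureTheory intervalIntegral Set Function

noncomputable def meanZeroPrimitive (f : ℝ → ℝ) (T y : ℝ) : ℝ :=
  (∫ t in (0:ℝ)..y, f t) - y / T * ∫ t in (0:ℝ)..T, f t

section MeanZeroPrimitive

variable {f : ℝ → ℝ} {T : ℝ}

theorem hasDerivAt_meanZeroPrimitive (hf : Continuous f) (y : ℝ) :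
    HasDerivAt (meanZeroPrimitive f T) (f y - (∫ t in (0:ℝ)..T, f t) / T) y := by
  have hprim : HasDerivAt (fun y => ∫ t in (0:ℝ)..y, f t) (f y) y :=
    hf.integral_hasStrictDerivAt 0 y |>.hasDerivAt
  exact (hprim.sub (((hasDerivAt_id' y).div_const T).mul_const
    (∫ t in (0:ℝ)..T, f t))).congr_deriv (by ring)

theorem Function.Periodic.meanZeroPrimitive (hf : Continuous f) (hper : Periodic f T) :
    Periodic (meanZeroPrimitive f T) T := by
  rcases eq_or_ne T 0 with rfl | hT
  · simp [Periodic]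
  intro y
  have hsplit : ∫ t in (0:ℝ)..y + T, f t = (∫ t in (0:ℝ)..y, f t) + ∫ t in (0:ℝ)..T, f t := by
    rw [← integral_add_adjacent_intervals (hf.intervalIntegrable 0 y)
      (hf.intervalIntegrable y (y + T)), hper.intervalIntegral_add_eq y 0, zero_add]
  simp only [_root_.meanZeroPrimitive, hsplit, add_div, div_self hT]
  ring

theorem abs_meanZeroPrimitive_le_of_mem_Icc (hf : Continuous f) (hT : 0 < T) {y : ℝ}
    (hy : y ∈ Icc 0 T) : |meanZeroPrimitive f T y| ≤ ∫ t in (0:ℝ)..T, |f t| := by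
  obtain ⟨hy0, hyT⟩ := hy
  set s := y / T
  have hs0 : 0 ≤ s := div_nonneg hy0 hT.le
  have hs1 : s ≤ 1 := div_le_one_of_le₀ hyT hT.le
  have hA : |∫ t in (0:ℝ)..y, f t| ≤ ∫ t in (0:ℝ)..y, |f t| := abs_integral_le_integral_abs hy0
  have hB : |∫ t in y..T, f t| ≤ ∫ t in y..T, |f t| := abs_integral_le_integral_abs hyT
  have hA' : 0 ≤ ∫ t in (0:ℝ)..y, |f t| := integral_nonneg hy0 fun _ _ => abs_nonneg _
  have hB' : 0 ≤ ∫ t in y..T, |f t| := integral_nonneg hyT fun _ _ => abs_nonneg _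
  rw [← integral_add_adjacent_intervals (hf.abs.intervalIntegrable 0 y)
    (hf.abs.intervalIntegrable y T)]
  have hconvex : meanZeroPrimitive f T y =
      (1 - s) * (∫ t in (0:ℝ)..y, f t) - s * ∫ t in y..T, f t := by
    rw [meanZeroPrimitive, ← integral_add_adjacent_intervals (hf.intervalIntegrable 0 y)
      (hf.intervalIntegrable y T)]
    ring
  calc |meanZeroPrimitive f T y|
      ≤ (1 - s) * |∫ t in (0:ℝ)..y, f t| + s * |∫ t in y..T, f t| := by
        rw [hconvex]
        refine (abs_sub _ _).trans_eq ?_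
        rw [abs_mul, abs_mul, abs_of_nonneg (sub_nonneg.2 hs1), abs_of_nonneg hs0]
    _ ≤ (1 - s) * (∫ t in (0:ℝ)..y, |f t|) + s * ∫ t in y..T, |f t| := by gcongr
    _ ≤ _ := by nlinarith

theorem abs_meanZeroPrimitive_le (hf : Continuous f) (hper : Periodic f T) (hT : 0 < T)
    (y : ℝ) : |meanZeroPrimitive f T y| ≤ ∫ t in (0:ℝ)..T, |f t| := by
  obtain ⟨z, hz, hyz⟩ := (hper.meanZeroPrimitive hf).exists_mem_Ico₀ hT y
  rw [hyz]
  exact abs_meanZeroPrimitive_le_of_mem_Icc hf hT (Ico_subset_Icc_self hz)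

end MeanZeroPrimitive

theorem integral_mul_comp_nat_mul_sub_mul_integral {f g g' : ℝ → ℝ} (hf : Continuous f)
    (hper : Periodic f 1) (hg : ∀ x ∈ uIcc (0:ℝ) 1, HasDerivAt g (g' x) x)
    (hg' : IntervalIntegrable g' volume 0 1) {R : ℕ} (hR : R ≠ 0) :
    (∫ x in (0:ℝ)..1, g x * f (R * x)) - (∫ x in (0:ℝ)..1, g x) * (∫ x in (0:ℝ)..1, f x) =
      -((R : ℝ)⁻¹ * ∫ x in (0:ℝ)..1, g' x * meanZeroPrimitive f 1 (R * x)) := by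
  set I := ∫ x in (0:ℝ)..1, f x
  set F := meanZeroPrimitive f 1
  have hR' : (R : ℝ) ≠ 0 := Nat.cast_ne_zero.2 hR
  have hv (x : ℝ) : HasDerivAt (fun x => (R : ℝ)⁻¹ * F (R * x)) (f (R * x) - I) x :=
    (((hasDerivAt_meanZeroPrimitive hf (R * x)).comp x
      ((hasDerivAt_id' x).const_mul (R : ℝ))).const_mul (R : ℝ)⁻¹).congr_deriv
      (by field_simp; rfl)
  have hF0 : F 0 = 0 := by simp [F, meanZeroPrimitive]
  have hFR : F (R * 1) = 0 := ((hper.meanZeroPrimitive hf).nat_mul_eq R).trans hF0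
  have hgint : IntervalIntegrable g volume 0 1 :=
    ContinuousOn.intervalIntegrable fun x hx => (hg x hx).continuousAt.continuousWithinAt
  have hfR : Continuous fun x : ℝ => f (R * x) := hf.comp (continuous_const_mul _)
  have ibp := integral_mul_deriv_eq_deriv_mul hg (fun x _ => hv x) hg'
    ((hfR.sub continuous_const).intervalIntegrable 0 1)
  simp only [hFR, mul_zero, hF0, sub_zero, zero_sub] at ibp
  rw [← intervalIntegral.integral_mul_const,
    ← integral_sub (hgint.mul_continuousOn hfR.continuousOn) (hgint.mul_const I),
    ← intervalIntegral.integral_const_mul]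
  simpa only [mul_sub, mul_left_comm (g' _)] using ibp

theorem mixing_lemma_general (f g : ℝ → ℝ) (hf : ContDiff ℝ 1 f) (hg : ContDiff ℝ 1 g)
    (hfper : Function.Periodic f 1)
    (R : ℕ) (hR : 0 < R) (K : ℝ) (hK : ∀ x, |deriv g x| ≤ K) :
    |(∫ x in (0:ℝ)..1, g x * f (R * x)) -
      (∫ x in (0:ℝ)..1, g x) * (∫ x in (0:ℝ)..1, f x)| ≤
    (K / R) * ∫ x in (0:ℝ)..1, |f x| := by
  rw [integral_mul_comp_nat_mul_sub_mul_integral hf.continuous hfper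
    (fun x _ => (hg.differentiable one_ne_zero x).hasDerivAt)
    ((hg.continuous_deriv le_rfl).intervalIntegrable 0 1) hR.ne', abs_neg, abs_mul, abs_inv,
    Nat.abs_cast, div_eq_inv_mul, mul_assoc]
  gcongr
  have hbound (x : ℝ) :
      ‖deriv g x * meanZeroPrimitive f 1 (R * x)‖ ≤ K * ∫ x in (0:ℝ)..1, |f x| := by
    rw [Real.norm_eq_abs, abs_mul]
    exact mul_le_mul (hK x) (abs_meanZeroPrimitive_le hf.continuous hfper one_pos _)
      (abs_nonneg _) ((abs_nonneg _).trans (hK x))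
  simpa using norm_integral_le_of_norm_le_const (a := 0) (b := 1) fun x _ => hbound x

/-- Functional mixing lemma: for `C¹` 1-periodic `f, g` and a positive integer `R`,
`|∫₀¹ g(x) f(Rx) dx - ∫₀¹ g ∫₀¹ f| ≤ (‖g'‖_∞ / R) ∫₀¹ |f|`. -/
theorem mixing_lemma (f g : ℝ → ℝ) (hf : ContDiff ℝ 1 f) (hg : ContDiff ℝ 1 g)
    (hfper : Function.Periodic f 1) (hgper : Function.Periodic g 1)
    (R : ℕ) (hR : 0 < R) (K : ℝ) (hK : ∀ x, |deriv g x| ≤ K) :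
    |(∫ x in (0:ℝ)..1, g x * f (R * x)) -
      (∫ x in (0:ℝ)..1, g x) * (∫ x in (0:ℝ)..1, f x)| ≤
    (K / R) * ∫ x in (0:ℝ)..1, |f x| :=
  mixing_lemma_general f g hf hg hfper R hR K hK
end

section
/- Let $(a_p)_{p\ge 0}$ and $(\gamma_p)_{p\ge 0}$ be sequences of nonnegative reals with $a_0 = \gamma_0$, and suppose there is $\gamma_{\min} > 2$ such that $\gamma_{p+1}/\gamma_p \ge \gamma_{\min}$ for all $p$ and $|a_p - \gamma_p| \le a_{p-1}$ for all $p \ge 1$ (with $a_p \ge 0$). Then for all $p$: $\gamma_p(1 - (\gamma_{\min}-1)^{-1}) \le a_p \le \gamma_p (1 - \gamma_{\min}^{-1})^{-1}$. -/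
/-- Abstract recursion underlying Lemma 6: if `a₀ = γ₀`, `γ` grows geometrically with ratio
`γmin > 2` and `|aₚ - γₚ| ≤ a_{p-1}`, then `aₚ ≍ γₚ`. -/
theorem var_recursion (a γ : ℕ → ℝ) (γmin : ℝ)
    (ha : ∀ p, 0 ≤ a p) (hγ : ∀ p, 0 ≤ γ p)
    (h0 : a 0 = γ 0) (hγmin : 2 < γmin)
    (hratio : ∀ p, γmin * γ p ≤ γ (p + 1))
    (hrec : ∀ p, |a (p + 1) - γ (p + 1)| ≤ a p) :
    ∀ p, γ p * (1 - (γmin - 1)⁻¹) ≤ a p ∧ a p ≤ γ p * (1 - γmin⁻¹)⁻¹ := by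
  have hm0 : (0:ℝ) < γmin := by linarith
  have h1 : (0:ℝ) < γmin - 1 := by linarith
  have hu : (γmin - 1)⁻¹ = 1 / (γmin - 1) := by rw [one_div]
  have hcval : (1 - γmin⁻¹)⁻¹ = γmin / (γmin - 1) := by
    rw [inv_eq_iff_eq_inv]
    field_simp
  have hu1 : (γmin - 1)⁻¹ < 1 := by
    rw [inv_lt_one_iff₀]; right; linarith
  have hu0 : 0 < (γmin - 1)⁻¹ := by positivity
  intro p
  induction p with
  | zero =>
    constructor
    · rw [h0]
      nlinarith [hγ 0]
    · rw [h0, hcval]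
      have hge : 1 ≤ γmin / (γmin - 1) := by rw [le_div_iff₀ h1]; linarith
      nlinarith [hγ 0]
  | succ p ih =>
    obtain ⟨ihl, ihr⟩ := ih
    have habs := hrec p
    rw [abs_le] at habs
    have hup : a p ≤ γ (p+1) * (γmin - 1)⁻¹ := by
      calc a p ≤ γ p * (1 - γmin⁻¹)⁻¹ := ihr
        _ = γ p * γmin * (γmin - 1)⁻¹ := by rw [hcval]; ring
        _ ≤ γ (p+1) * (γmin - 1)⁻¹ := by
            have := hratio p
            have : γ p * γmin ≤ γ (p+1) := by linarith [hratio p]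
            exact mul_le_mul_of_nonneg_right this hu0.le
    constructor
    · have : γ (p+1) - a p ≤ a (p+1) := by linarith [habs.1]
      nlinarith
    · rw [hcval]
      have h2 : a (p+1) ≤ γ (p+1) + a p := by linarith [habs.2]
      have h3 : γ (p+1) + γ (p+1) * (γmin - 1)⁻¹ = γ (p+1) * γmin / (γmin - 1) := by
        field_simp
        ring
      calc a (p+1) ≤ γ (p+1) + γ (p+1) * (γmin - 1)⁻¹ := by linarith
        _ = γ (p+1) * γmin / (γmin - 1) := h3
        _ = γ (p+1) * (γmin / (γmin - 1)) := by ring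
end

section
/- Let $(b_s)$ be a standard one-dimensional Brownian motion, $H : \mathbb{R}\to\mathbb{R}$ continuous and periodic of period $R$, $\kappa$ its mean over one period, $V = \frac{1}{R}\int_0^R (H(y)-\kappa)^2 dy$ its variance, and $M = \mathrm{Osc}(H)$. Then for all $t > 0$: $\Big|\mathbb{E}\Big[\int_0^t (H(b_s) - \kappa)^2\,ds\Big] - V t\Big| \le 4 M^2 R^2$. -/
/-!
With `φ = (H - κ)²` and `V` its mean, `φ - V` is `R`-periodic with zero mean, so it has a bounded
`R`-periodic second primitive `G` with `G 0 = 0` and `|G| ≤ 2 M² R²`. Along the heat flow,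
`d/ds E[G(√s Z)] = ½ E[G''(√s Z)]` for a standard Gaussian `Z`: differentiate in `σ = √s` and use
Gaussian integration by parts (Stein's identity `E[Z f(Z)] = E[f'(Z)]`). Integrating in `s` gives
`∫₀ᵗ (E[φ(√s Z)] - V) ds = 2 E[G(√t Z)]`, which is Itô's formula for `G(b_t)` in expectation, and
`b_s ~ √s Z` together with Fubini identifies the left side with `E[∫₀ᵗ φ(b_s) ds] - V t`.
-/

open MeasureTheory ProbabilityTheory intervalIntegral

/-- A standard one-dimensional Brownian motion started at `0`, under the probability
measure `P`: continuous paths, independent increments, Gaussian increments. -/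
structure IsBrownianMotion {Ω : Type*} [MeasurableSpace Ω] (P : Measure Ω)
    (B : ℝ → Ω → ℝ) : Prop where
  isProb : IsProbabilityMeasure P
  meas : ∀ t, Measurable (B t)
  init : ∀ᵐ ω ∂P, B 0 ω = 0
  cont : ∀ᵐ ω ∂P, Continuous fun t => B t ω
  indep : ∀ (n : ℕ) (t : ℕ → ℝ), Monotone t →
    iIndepFun
      (fun i : Fin n => fun ω => B (t (i + 1)) ω - B (t i) ω) P
  gauss : ∀ s t : ℝ, 0 ≤ s → s ≤ t →
    Measure.map (fun ω => B t ω - B s ω) P = gaussianReal 0 (Real.toNNReal (t - s))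

open Real Function

lemma abs_sub_mean_le_of_forall_sub_le {f : ℝ → ℝ} {T M : ℝ} (hT : 0 < T)
    (hf : IntervalIntegrable f volume 0 T) (hosc : ∀ x y, f x - f y ≤ M) (x : ℝ) :
    |f x - (1 / T) * ∫ y in (0:ℝ)..T, f y| ≤ M := by
  have hmean : f x - (1 / T) * ∫ y in (0:ℝ)..T, f y
      = (1 / T) * ∫ y in (0:ℝ)..T, (f x - f y) := by
    rw [integral_sub intervalIntegrable_const hf, intervalIntegral.integral_const, smul_eq_mul,
      sub_zero]
    field_simp
  have hbound : ‖∫ y in (0:ℝ)..T, (f x - f y)‖ ≤ M * |T - 0| :=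
    norm_integral_le_of_norm_le_const fun y _ => abs_le.2 ⟨by linarith [hosc y x], hosc x y⟩
  rw [Real.norm_eq_abs, sub_zero, abs_of_pos hT] at hbound
  rw [hmean, abs_mul, abs_of_pos (by positivity : (0:ℝ) < 1 / T)]
  calc 1 / T * |∫ y in (0:ℝ)..T, (f x - f y)| ≤ 1 / T * (M * T) := by gcongr
    _ = M := by field_simp

lemma integral_sub_mean_eq_zero {f : ℝ → ℝ} {T : ℝ} (hT : T ≠ 0)
    (hf : IntervalIntegrable f volume 0 T) :
    ∫ x in (0:ℝ)..T, (f x - (1 / T) * ∫ y in (0:ℝ)..T, f y) = 0 := by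
  rw [integral_sub hf intervalIntegrable_const, intervalIntegral.integral_const, smul_eq_mul,
    sub_zero]
  field_simp
  ring

lemma Function.Periodic.primitive {f : ℝ → ℝ} {T : ℝ} (hf : Periodic f T)
    (hint : ∀ a b, IntervalIntegrable f volume a b) (hmean : ∫ y in (0:ℝ)..T, f y = 0) :
    Periodic (fun x => ∫ y in (0:ℝ)..x, f y) T := fun x => by
  simp only [hf.intervalIntegral_add_eq_add 0 x hint, zero_add, hmean, add_zero]

lemma Function.Periodic.abs_primitive_le {f : ℝ → ℝ} {T C : ℝ} (hT : 0 < T) (hf : Periodic f T)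
    (hint : ∀ a b, IntervalIntegrable f volume a b) (hmean : ∫ y in (0:ℝ)..T, f y = 0)
    (hC : ∀ x, |f x| ≤ C) (x : ℝ) :
    |∫ y in (0:ℝ)..x, f y| ≤ C * T := by
  obtain ⟨y, hy, hxy⟩ := (hf.primitive hint hmean).exists_mem_Ico₀ hT x
  have hbound : ‖∫ u in (0:ℝ)..y, f u‖ ≤ C * |y - 0| :=
    norm_integral_le_of_norm_le_const fun u _ => hC u
  rw [Real.norm_eq_abs, sub_zero, abs_of_nonneg hy.1] at hbound
  have hC0 : 0 ≤ C := (abs_nonneg _).trans (hC 0)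
  rw [hxy]
  exact hbound.trans (by gcongr; exact hy.2.le)

lemma exists_bounded_second_primitive {g : ℝ → ℝ} {T C : ℝ} (hT : 0 < T) (hg : Continuous g)
    (hper : Periodic g T) (hmean : ∫ y in (0:ℝ)..T, g y = 0) (hC : ∀ x, |g x| ≤ C) :
    ∃ G G' : ℝ → ℝ, (∀ x, HasDerivAt G (G' x) x) ∧ (∀ x, HasDerivAt G' (g x) x) ∧
      G 0 = 0 ∧ (∀ x, |G' x| ≤ 2 * C * T) ∧ ∀ x, |G x| ≤ 2 * C * T ^ 2 := by
  set F : ℝ → ℝ := fun x => ∫ y in (0:ℝ)..x, g y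
  have hFg : ∀ x, HasDerivAt F (g x) x := fun x => (hg.integral_hasStrictDerivAt 0 x).hasDerivAt
  have hFc : Continuous F := continuous_iff_continuousAt.2 fun x => (hFg x).continuousAt
  have hgint : ∀ a b, IntervalIntegrable g volume a b := hg.intervalIntegrable
  have hFbound : ∀ x, |F x| ≤ C * T := hper.abs_primitive_le hT hgint hmean hC
  -- `F` is periodic but need not have mean zero; centring it makes its primitive periodic too.
  set G' : ℝ → ℝ := fun x => F x - (1 / T) * ∫ y in (0:ℝ)..T, F y
  have hG'c : Continuous G' := hFc.sub continuous_const
  have hG'bound : ∀ x, |G' x| ≤ 2 * C * T :=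
    abs_sub_mean_le_of_forall_sub_le hT (hFc.intervalIntegrable 0 T) fun x y => by
      linarith [(abs_le.1 (hFbound x)).2, (abs_le.1 (hFbound y)).1]
  have hG'mean : ∫ y in (0:ℝ)..T, G' y = 0 :=
    integral_sub_mean_eq_zero hT.ne' (hFc.intervalIntegrable 0 T)
  have hG'per : Periodic G' T := fun x => by
    simp only [G', show F (x + T) = F x from hper.primitive hgint hmean x]
  refine ⟨fun x => ∫ y in (0:ℝ)..x, G' y, G',
    fun x => (hG'c.integral_hasStrictDerivAt 0 x).hasDerivAt, fun x => (hFg x).sub_const _,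
    integral_same, hG'bound, fun x => ?_⟩
  calc |∫ y in (0:ℝ)..x, G' y| ≤ 2 * C * T * T :=
        hG'per.abs_primitive_le hT hG'c.intervalIntegrable hG'mean hG'bound x
    _ = 2 * C * T ^ 2 := by ring

lemma gaussianPDFReal_zero_one (z : ℝ) :
    gaussianPDFReal 0 1 z = (√(2 * π))⁻¹ * rexp (-(1 / 2) * z ^ 2) := by
  simp only [gaussianPDFReal, NNReal.coe_one, mul_one, sub_zero]
  ring_nf

lemma hasDerivAt_gaussianPDFReal_zero_one (z : ℝ) :
    HasDerivAt (gaussianPDFReal 0 1) (-z * gaussianPDFReal 0 1 z) z := by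
  simp only [funext gaussianPDFReal_zero_one]
  have := (((hasDerivAt_pow 2 z).const_mul (-(1 / 2) : ℝ)).exp).const_mul (√(2 * π))⁻¹
  exact this.congr_deriv (by push_cast; ring)

lemma integrable_mul_gaussianPDFReal_zero_one :
    Integrable fun z => z * gaussianPDFReal 0 1 z := by
  simp only [gaussianPDFReal_zero_one, mul_left_comm _ (√(2 * π))⁻¹]
  exact (integrable_mul_exp_neg_mul_sq (by norm_num : (0:ℝ) < 1 / 2)).const_mul _

lemma measurable_deriv_of_hasDerivAt {f f' : ℝ → ℝ} (hf : ∀ x, HasDerivAt f (f' x) x) :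
    Measurable f' := by
  simpa only [funext fun x => (hf x).deriv] using measurable_deriv f

theorem integral_mul_gaussianReal_eq_integral_deriv {f f' : ℝ → ℝ} {A B : ℝ}
    (hf : ∀ z, HasDerivAt f (f' z) z) (hfA : ∀ z, |f z| ≤ A) (hf'B : ∀ z, |f' z| ≤ B) :
    ∫ z, z * f z ∂gaussianReal 0 1 = ∫ z, f' z ∂gaussianReal 0 1 := by
  have hfm : AEStronglyMeasurable f volume :=
    (continuous_iff_continuousAt.2 fun z => (hf z).continuousAt).aestronglyMeasurable
  have hf'm : AEStronglyMeasurable f' volume :=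
    (measurable_deriv_of_hasDerivAt hf).aestronglyMeasurable
  have hv' : Integrable fun z => -z * gaussianPDFReal 0 1 z := by
    simpa only [neg_mul] using integrable_mul_gaussianPDFReal_zero_one.fun_neg
  have ibp := integral_mul_deriv_eq_deriv_mul_of_integrable (fun z _ => hf z)
    (fun z _ => hasDerivAt_gaussianPDFReal_zero_one z) (hv'.bdd_mul hfm (ae_of_all _ hfA))
    ((integrable_gaussianPDFReal 0 1).bdd_mul hf'm (ae_of_all _ hf'B))
    ((integrable_gaussianPDFReal 0 1).bdd_mul hfm (ae_of_all _ hfA))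
  simp only [integral_gaussianReal_eq_integral_smul one_ne_zero, smul_eq_mul]
  calc ∫ z, gaussianPDFReal 0 1 z * (z * f z) = -∫ z, f z * (-z * gaussianPDFReal 0 1 z) := by
        rw [← MeasureTheory.integral_neg]; congr 1; ext z; ring
    _ = ∫ z, gaussianPDFReal 0 1 z * f' z := by
        rw [ibp, neg_neg]; congr 1; ext z; ring

lemma integrable_abs_gaussianReal : Integrable (fun z => |z|) (gaussianReal 0 1) :=
  ((memLp_id_gaussianReal 1).integrable le_rfl).abs

lemma hasDerivAt_integral_comp_mul_gaussianReal {G G' : ℝ → ℝ} {A B : ℝ}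
    (hG : ∀ x, HasDerivAt G (G' x) x) (hGA : ∀ x, |G x| ≤ A) (hG'B : ∀ x, |G' x| ≤ B) (σ : ℝ) :
    HasDerivAt (fun σ => ∫ z, G (σ * z) ∂gaussianReal 0 1)
      (∫ z, z * G' (σ * z) ∂gaussianReal 0 1) σ := by
  have hGc : Continuous G := continuous_iff_continuousAt.2 fun x => (hG x).continuousAt
  have hG'm : Measurable G' := measurable_deriv_of_hasDerivAt hG
  refine (hasDerivAt_integral_of_dominated_loc_of_deriv_le (F := fun σ z => G (σ * z))
    (F' := fun σ z => z * G' (σ * z)) (bound := fun z => B * |z|)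
    Filter.univ_mem (Filter.Eventually.of_forall fun σ => (hGc.comp
      (continuous_const_mul σ)).aestronglyMeasurable)
    ((integrable_const A).mono' (hGc.comp (continuous_const_mul σ)).aestronglyMeasurable
      (ae_of_all _ fun z => hGA _))
    (measurable_id.mul (hG'm.comp (measurable_const_mul σ))).aestronglyMeasurable
    (ae_of_all _ fun z σ _ => ?_) (integrable_abs_gaussianReal.const_mul B)
    (ae_of_all _ fun z σ _ =>
      ((hG (σ * z)).comp σ ((hasDerivAt_id σ).mul_const z)).congr_deriv (by ring))).2
  rw [Real.norm_eq_abs, abs_mul, mul_comm B]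
  exact mul_le_mul_of_nonneg_left (hG'B _) (abs_nonneg z)

lemma hasDerivAt_integral_comp_sqrt_mul_gaussianReal {G G' G'' : ℝ → ℝ} {A B C : ℝ}
    (hG : ∀ x, HasDerivAt G (G' x) x) (hG' : ∀ x, HasDerivAt G' (G'' x) x)
    (hGA : ∀ x, |G x| ≤ A) (hG'B : ∀ x, |G' x| ≤ B) (hG''C : ∀ x, |G'' x| ≤ C) {s : ℝ}
    (hs : 0 < s) :
    HasDerivAt (fun s => ∫ z, G (√s * z) ∂gaussianReal 0 1)
      (2⁻¹ * ∫ z, G'' (√s * z) ∂gaussianReal 0 1) s := by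
  have hstein : ∫ z, z * G' (√s * z) ∂gaussianReal 0 1
      = √s * ∫ z, G'' (√s * z) ∂gaussianReal 0 1 := by
    rw [← MeasureTheory.integral_const_mul]
    refine integral_mul_gaussianReal_eq_integral_deriv (A := B) (B := √s * C)
      (fun z => ((hG' (√s * z)).comp z ((hasDerivAt_id z).const_mul √s)).congr_deriv (by ring))
      (fun z => hG'B _) (fun z => ?_)
    rw [abs_mul, abs_of_nonneg (sqrt_nonneg s)]
    exact mul_le_mul_of_nonneg_left (hG''C _) (sqrt_nonneg s)
  refine ((hasDerivAt_integral_comp_mul_gaussianReal hG hGA hG'B √s).comp s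
    (hasDerivAt_sqrt hs.ne')).congr_deriv ?_
  rw [hstein]
  field_simp

lemma continuous_integral_comp_sqrt_mul_gaussianReal {f : ℝ → ℝ} {C : ℝ} (hf : Continuous f)
    (hC : ∀ x, |f x| ≤ C) : Continuous fun s => ∫ z, f (√s * z) ∂gaussianReal 0 1 :=
  continuous_of_dominated (fun _ => (hf.comp (continuous_const_mul _)).aestronglyMeasurable)
    (fun _ => ae_of_all _ fun _ => hC _) (integrable_const C)
    (ae_of_all _ fun _ => hf.comp (continuous_sqrt.mul continuous_const))

theorem integral_integral_comp_sqrt_mul_gaussianReal {G G' G'' : ℝ → ℝ} {A B C : ℝ}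
    (hG : ∀ x, HasDerivAt G (G' x) x) (hG' : ∀ x, HasDerivAt G' (G'' x) x)
    (hG''c : Continuous G'') (hGA : ∀ x, |G x| ≤ A) (hG'B : ∀ x, |G' x| ≤ B)
    (hG''C : ∀ x, |G'' x| ≤ C) {t : ℝ} (ht : 0 ≤ t) :
    ∫ s in (0:ℝ)..t, ∫ z, G'' (√s * z) ∂gaussianReal 0 1
      = 2 * (∫ z, G (√t * z) ∂gaussianReal 0 1 - G 0) := by
  have hGc : Continuous G := continuous_iff_continuousAt.2 fun x => (hG x).continuousAt
  have hftc := integral_eq_sub_of_hasDerivAt_of_le ht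
    (continuous_integral_comp_sqrt_mul_gaussianReal hGc hGA).continuousOn
    (fun s hs => hasDerivAt_integral_comp_sqrt_mul_gaussianReal hG hG' hGA hG'B hG''C hs.1)
    ((continuous_const.mul
      (continuous_integral_comp_sqrt_mul_gaussianReal hG''c hG''C)).intervalIntegrable 0 t)
  simp only [intervalIntegral.integral_const_mul, sqrt_zero, zero_mul,
    MeasureTheory.integral_const, probReal_univ, one_smul] at hftc
  linarith

lemma exists_continuous_indistinguishable {ι E Ω : Type*} [TopologicalSpace ι]
    [TopologicalSpace E] [MeasurableSpace E] [Zero E] [MeasurableSpace Ω] {P : Measure Ω}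
    {X : ι → Ω → E} (hmeas : ∀ t, Measurable (X t)) (hcont : ∀ᵐ ω ∂P, Continuous fun t => X t ω) :
    ∃ Y : ι → Ω → E, (∀ t, Measurable (Y t)) ∧ (∀ ω, Continuous fun t => Y t ω) ∧
      ∀ᵐ ω ∂P, ∀ t, Y t ω = X t ω := by
  classical
  set N := toMeasurable P {ω | ¬ Continuous fun t => X t ω}
  have hN : ∀ᵐ ω ∂P, ω ∉ N := by
    rw [← measure_eq_zero_iff_ae_notMem, measure_toMeasurable]
    exact ae_iff.1 hcont
  refine ⟨fun t ω => if ω ∈ N then 0 else X t ω,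
    fun t => Measurable.ite (measurableSet_toMeasurable _ _) measurable_const (hmeas t),
    fun ω => ?_, hN.mono fun ω hω t => if_neg hω⟩
  by_cases hω : ω ∈ N
  · simpa only [hω, if_true] using continuous_const
  · simp only [hω, if_false]
    by_contra h
    exact hω (subset_toMeasurable _ _ h)

lemma integral_intervalIntegral_comm {Ω : Type*} [MeasurableSpace Ω] {P : Measure Ω}
    [IsFiniteMeasure P] {X : ℝ → Ω → ℝ} (hmeas : ∀ s, Measurable (X s))
    (hcont : ∀ ω, Continuous fun s => X s ω) {C : ℝ} (hC : ∀ s ω, |X s ω| ≤ C) {t : ℝ}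
    (ht : 0 ≤ t) :
    ∫ ω, (∫ s in (0:ℝ)..t, X s ω) ∂P = ∫ s in (0:ℝ)..t, ∫ ω, X s ω ∂P := by
  have hX : StronglyMeasurable (uncurry X) :=
    stronglyMeasurable_uncurry_of_continuous_of_stronglyMeasurable hcont
      fun s => (hmeas s).stronglyMeasurable
  simp only [integral_of_le ht]
  exact (integral_integral_swap ((integrable_const C).mono' hX.aestronglyMeasurable
    (ae_of_all _ fun p => hC p.1 p.2))).symm

lemma IsBrownianMotion.map_eq_gaussianReal {Ω : Type*} [MeasurableSpace Ω] {P : Measure Ω}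
    {b : ℝ → Ω → ℝ} (hb : IsBrownianMotion P b) {s : ℝ} (hs : 0 ≤ s) :
    P.map (b s) = gaussianReal 0 s.toNNReal := by
  have hb0 : (fun ω => b s ω - b 0 ω) =ᵐ[P] b s := hb.init.mono fun ω hω => by
    simp only [hω, sub_zero]
  rw [← Measure.map_congr hb0, hb.gauss 0 s le_rfl hs, sub_zero]

lemma gaussianReal_toNNReal_eq_map_sqrt_mul {s : ℝ} (hs : 0 ≤ s) :
    gaussianReal 0 s.toNNReal = (gaussianReal 0 1).map (√s * ·) := by
  rw [gaussianReal_map_const_mul, mul_zero]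
  congr 1
  ext
  simp [sq_sqrt hs, hs]

lemma IsBrownianMotion.integral_comp {Ω : Type*} [MeasurableSpace Ω] {P : Measure Ω}
    {b : ℝ → Ω → ℝ} (hb : IsBrownianMotion P b) {φ : ℝ → ℝ} (hφ : Measurable φ) {s : ℝ}
    (hs : 0 ≤ s) :
    ∫ ω, φ (b s ω) ∂P = ∫ z, φ (√s * z) ∂gaussianReal 0 1 := by
  rw [← integral_map (hb.meas s).aemeasurable hφ.aestronglyMeasurable,
    hb.map_eq_gaussianReal hs, gaussianReal_toNNReal_eq_map_sqrt_mul hs,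
    integral_map (measurable_const_mul _).aemeasurable hφ.aestronglyMeasurable]

theorem IsBrownianMotion.integral_intervalIntegral_comp {Ω : Type*} [MeasurableSpace Ω]
    {P : Measure Ω} {b : ℝ → Ω → ℝ} (hb : IsBrownianMotion P b) {φ : ℝ → ℝ}
    (hφ : Continuous φ) {C : ℝ} (hC : ∀ x, |φ x| ≤ C) {t : ℝ} (ht : 0 ≤ t) :
    ∫ ω, (∫ s in (0:ℝ)..t, φ (b s ω)) ∂P
      = ∫ s in (0:ℝ)..t, ∫ z, φ (√s * z) ∂gaussianReal 0 1 := by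
  have := hb.isProb
  obtain ⟨b', hb'm, hb'c, hb'b⟩ := exists_continuous_indistinguishable hb.meas hb.cont
  calc ∫ ω, (∫ s in (0:ℝ)..t, φ (b s ω)) ∂P = ∫ ω, (∫ s in (0:ℝ)..t, φ (b' s ω)) ∂P :=
        integral_congr_ae (hb'b.mono fun ω hω => by simp only [hω])
    _ = ∫ s in (0:ℝ)..t, ∫ ω, φ (b' s ω) ∂P :=
        integral_intervalIntegral_comm (fun s => hφ.measurable.comp (hb'm s))
          (fun ω => hφ.comp (hb'c ω)) (fun _ _ => hC _) ht
    _ = ∫ s in (0:ℝ)..t, ∫ ω, φ (b s ω) ∂P :=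
        integral_congr fun s _ => integral_congr_ae (hb'b.mono fun ω hω => by simp only [hω])
    _ = ∫ s in (0:ℝ)..t, ∫ z, φ (√s * z) ∂gaussianReal 0 1 :=
        integral_congr fun s hs => hb.integral_comp hφ.measurable (Set.uIcc_of_le ht ▸ hs).1

theorem abs_intervalIntegral_integral_comp_sqrt_mul_sub_le {φ : ℝ → ℝ} {R C t : ℝ}
    (hR : 0 < R) (ht : 0 ≤ t) (hφ : Continuous φ) (hper : Periodic φ R)
    (hosc : ∀ x y, φ x - φ y ≤ C) :
    |(∫ s in (0:ℝ)..t, ∫ z, φ (√s * z) ∂gaussianReal 0 1)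
        - ((1 / R) * ∫ y in (0:ℝ)..R, φ y) * t| ≤ 4 * C * R ^ 2 := by
  set V := (1 / R) * ∫ y in (0:ℝ)..R, φ y
  have hφV : ∀ x, |φ x - V| ≤ C :=
    abs_sub_mean_le_of_forall_sub_le hR (hφ.intervalIntegrable 0 R) hosc
  obtain ⟨G, G', hG, hG', hG0, hG'bound, hGbound⟩ := exists_bounded_second_primitive
    (g := fun x => φ x - V) hR (hφ.sub continuous_const) (fun x => by simp only [hper x])
    (integral_sub_mean_eq_zero hR.ne' (hφ.intervalIntegrable 0 R)) hφV
  have hφbound : ∀ x, |φ x| ≤ |V| + C := fun x => by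
    linarith [abs_sub_abs_le_abs_sub (φ x) V, hφV x]
  have hmean : ∀ s, ∫ z, (φ (√s * z) - V) ∂gaussianReal 0 1
      = (∫ z, φ (√s * z) ∂gaussianReal 0 1) - V := fun s => by
    have hint : Integrable (fun z => φ (√s * z)) (gaussianReal 0 1) :=
      (integrable_const _).mono'
        (by fun_prop : Continuous fun z => φ (√s * z)).aestronglyMeasurable
        (ae_of_all _ fun z => hφbound _)
    rw [integral_sub hint (integrable_const V), MeasureTheory.integral_const, probReal_univ,
      one_smul]
  have hEG : |∫ z, G (√t * z) ∂gaussianReal 0 1| ≤ 2 * C * R ^ 2 := by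
    simpa only [Real.norm_eq_abs, probReal_univ, mul_one] using
      norm_integral_le_of_norm_le_const (μ := gaussianReal 0 1) (f := fun z => G (√t * z))
        (ae_of_all _ fun z => hGbound (√t * z))
  have key := integral_integral_comp_sqrt_mul_gaussianReal (G'' := fun x => φ x - V) hG hG'
    (hφ.sub continuous_const) hGbound hG'bound hφV ht
  rw [integral_congr fun s _ => hmean s, integral_sub
    ((continuous_integral_comp_sqrt_mul_gaussianReal hφ hφbound).intervalIntegrable 0 t)
    intervalIntegrable_const, intervalIntegral.integral_const, smul_eq_mul, sub_zero, hG0,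
    sub_zero] at key
  rw [mul_comm V t, key, abs_mul, abs_two]
  linarith

/-- Quantitative homogenization estimate: for `H` continuous `R`-periodic with mean `κ`,
variance `V` and oscillation at most `M`, `|E[∫₀ᵗ (H(b_s)-κ)² ds] - Vt| ≤ 4M²R²`. -/
theorem homogenization_additive_functional {Ω : Type*} [MeasurableSpace Ω]
    (P : Measure Ω) (b : ℝ → Ω → ℝ) (hb : IsBrownianMotion P b)
    (H : ℝ → ℝ) (R M t : ℝ) (hR : 0 < R) (ht : 0 < t)
    (hcont : Continuous H) (hper : Function.Periodic H R)
    (hosc : ∀ x y, H x - H y ≤ M) :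
    |(∫ ω, (∫ s in (0:ℝ)..t,
          (H (b s ω) - (1/R) * ∫ y in (0:ℝ)..R, H y) ^ 2) ∂P)
        - ((1/R) * ∫ y in (0:ℝ)..R, (H y - (1/R) * ∫ z in (0:ℝ)..R, H z) ^ 2) * t|
      ≤ 4 * M ^ 2 * R ^ 2 := by
  set κ := (1 / R) * ∫ y in (0:ℝ)..R, H y
  have hHκ : ∀ x, |H x - κ| ≤ M :=
    abs_sub_mean_le_of_forall_sub_le hR (hcont.intervalIntegrable 0 R) hosc
  have hφ : Continuous fun x => (H x - κ) ^ 2 := by fun_prop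
  have hφbound : ∀ x, |(H x - κ) ^ 2| ≤ M ^ 2 := fun x => by
    rw [abs_pow]
    exact pow_le_pow_left₀ (abs_nonneg _) (hHκ x) 2
  rw [hb.integral_intervalIntegral_comp hφ hφbound ht.le]
  exact abs_intervalIntegral_integral_comp_sqrt_mul_sub_le hR ht.le hφ
    (fun x => by simp only [hper x]) fun x y => by
      linarith [(abs_le.1 (hφbound x)).2, sq_nonneg (H y - κ)]
end

section
/- Let $j : \mathbb{R} \to \mathbb{R}$ be a smooth function of period $1$ and let $J$ be the skew-symmetric matrix field on the torus $\mathbb{T}^2$ with $J_{12}(x_1,x_2) = j(x_1) = -J_{21}$. For $l \in \mathbb{R}^2$, the periodic solution $\chi_l$ of the cell problem $\frac{1}{2}\Delta(\chi_l - l\cdot x) - \nabla J \nabla(\chi_l - l \cdot x) = 0$, $\chi_l(0)=0$, is given by $\chi_l(x_1,x_2) = -2 l_2\big[\int_0^{x_1} j(y)\,dy - x_1 \int_0^1 j(y)\,dy\big]$, and the effective diffusivity $l^T D(J) l = \int_{\mathbb{T}^2} |l - \nabla\chi_l(x)|^2 dx$ equals $l_1^2 + l_2^2(1 + 4\,\mathrm{Var}(j))$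 where $\mathrm{Var}(j) = \int_0^1 (j - \int_0^1 j)^2$. -/
open MeasureTheory intervalIntegral

/-- Homogenization of the shear-flow operator `L_J = ½Δ - ∇J∇` on the torus: the corrector
`χ_l(x) = -2l₂[∫₀^{x₁} j - x₁ ∫₀¹ j]` solves the cell problem (with `χ_l(0) = 0`), and the
effective diffusivity `lᵀ D(J) l = ∫_{T²} |l - ∇χ_l|²` equals `l₁² + l₂²(1 + 4 Var j)`. -/
theorem cell_problem_shear_flow (j : ℝ → ℝ) (hj : ContDiff ℝ (⊤ : ℕ∞) j)
    (hjper : Function.Periodic j 1) (l : ℝ × ℝ)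
    (χ : ℝ × ℝ → ℝ)
    (hχ : χ = fun x => -2 * l.2 * ((∫ y in (0:ℝ)..x.1, j y) - x.1 * ∫ y in (0:ℝ)..1, j y)) :
    χ (0, 0) = 0 ∧
    (∀ x : ℝ × ℝ,
      (1/2) * (deriv (deriv (fun s => χ (s, x.2) - (l.1 * s + l.2 * x.2))) x.1 +
               deriv (deriv (fun t => χ (x.1, t) - (l.1 * x.1 + l.2 * t))) x.2) -
        deriv j x.1 * deriv (fun t => χ (x.1, t) - (l.1 * x.1 + l.2 * t)) x.2 = 0) ∧
    (∫ x in (0:ℝ)..1,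
        ((l.1 - deriv (fun s => χ (s, (0:ℝ))) x) ^ 2 +
         (l.2 - deriv (fun t => χ (x, t)) 0) ^ 2))
      = l.1 ^ 2 + l.2 ^ 2 * (1 + 4 * ∫ x in (0:ℝ)..1, (j x - ∫ y in (0:ℝ)..1, j y) ^ 2) := by
  subst hχ
  have hjc : Continuous j := hj.continuous
  set c : ℝ := ∫ y in (0:ℝ)..1, j y with hc
  -- derivative in the first variable
  have hF : ∀ s : ℝ, HasDerivAt (fun u => ∫ y in (0:ℝ)..u, j y) (j s) s :=
    fun s => (hjc.integral_hasStrictDerivAt 0 s).hasDerivAt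
  have hds : ∀ (x2 : ℝ) (s : ℝ),
      HasDerivAt (fun s => -2 * l.2 * ((∫ y in (0:ℝ)..s, j y) - s * c) - (l.1 * s + l.2 * x2))
        (-2 * l.2 * (j s - c) - l.1) s := by
    intro x2 s
    have h1 : HasDerivAt (fun s : ℝ => (∫ y in (0:ℝ)..s, j y) - s * c) (j s - c) s :=
      (hF s).sub (by simpa using (hasDerivAt_id s).mul_const c)
    have h2 : HasDerivAt (fun s : ℝ => l.1 * s + l.2 * x2) l.1 s := by
      simpa using ((hasDerivAt_id s).const_mul l.1).add_const (l.2 * x2)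
    exact (h1.const_mul (-2 * l.2)).sub h2
  have hderiv1 : ∀ (x2 : ℝ),
      deriv (fun s => -2 * l.2 * ((∫ y in (0:ℝ)..s, j y) - s * c) - (l.1 * s + l.2 * x2))
        = fun s => -2 * l.2 * (j s - c) - l.1 := by
    intro x2; funext s; exact (hds x2 s).deriv
  -- derivative in the second variable
  have hdt : ∀ (x1 : ℝ) (t : ℝ),
      HasDerivAt (fun t => -2 * l.2 * ((∫ y in (0:ℝ)..x1, j y) - x1 * c) - (l.1 * x1 + l.2 * t))
        (-l.2) t := by
    intro x1 t
    have : HasDerivAt (fun t : ℝ => l.1 * x1 + l.2 * t) l.2 t := by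
      simpa using (((hasDerivAt_id t).const_mul l.2).const_add (l.1 * x1))
    have h3 := (hasDerivAt_const t (-2 * l.2 * ((∫ y in (0:ℝ)..x1, j y) - x1 * c))).sub this
    rw [zero_sub] at h3
    exact h3
  have hderiv2 : ∀ (x1 : ℝ),
      deriv (fun t => -2 * l.2 * ((∫ y in (0:ℝ)..x1, j y) - x1 * c) - (l.1 * x1 + l.2 * t))
        = fun _ => -l.2 := by
    intro x1; funext t; exact (hdt x1 t).deriv
  refine ⟨by simp, ?_, ?_⟩
  · intro x
    have hj' : HasDerivAt j (deriv j x.1) x.1 :=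
      ((hj.differentiable (by simp)) x.1).hasDerivAt
    rw [hderiv1 x.2, hderiv2 x.1]
    have h2 : deriv (fun s => -2 * l.2 * (j s - c) - l.1) x.1 = -2 * l.2 * deriv j x.1 :=
      (((hj'.sub_const c).const_mul (-2 * l.2)).sub_const l.1).deriv
    rw [h2, deriv_const]
    ring
  · have hd1 : ∀ x : ℝ,
        deriv (fun s => -2 * l.2 * ((∫ y in (0:ℝ)..s, j y) - s * c)) x
          = -2 * l.2 * (j x - c) := by
      intro x
      have h1 : HasDerivAt (fun s : ℝ => (∫ y in (0:ℝ)..s, j y) - s * c) (j x - c) x :=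
        (hF x).sub (by simpa using (hasDerivAt_id x).mul_const c)
      exact (h1.const_mul (-2 * l.2)).deriv
    simp only
    have hEq : ∀ x : ℝ,
        (l.1 - deriv (fun s => -2 * l.2 * ((∫ y in (0:ℝ)..s, j y) - s * c)) x) ^ 2 +
          (l.2 - deriv (fun _ : ℝ => -2 * l.2 * ((∫ y in (0:ℝ)..x, j y) - x * c)) 0) ^ 2
        = (l.1 ^ 2 + l.2 ^ 2) + (4 * l.1 * l.2) * (j x - c)
            + (4 * l.2 ^ 2) * (j x - c) ^ 2 := by
      intro x
      rw [hd1 x, deriv_const]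
      ring
    rw [intervalIntegral.integral_congr (g := fun x : ℝ =>
        (l.1 ^ 2 + l.2 ^ 2) + (4 * l.1 * l.2) * (j x - c) + (4 * l.2 ^ 2) * (j x - c) ^ 2)
        (fun x _ => hEq x)]
    have hcont1 : Continuous fun x : ℝ => (4 * l.1 * l.2) * (j x - c) := continuous_const.mul (hjc.sub continuous_const)
    have hcont2 : Continuous fun x : ℝ => (4 * l.2 ^ 2) * (j x - c) ^ 2 := continuous_const.mul ((hjc.sub continuous_const).pow 2)
    rw [intervalIntegral.integral_add (by
          exact ((_root_.intervalIntegrable_const).add (hcont1.intervalIntegrable _ _)) )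
        (hcont2.intervalIntegrable _ _),
      intervalIntegral.integral_add _root_.intervalIntegrable_const (hcont1.intervalIntegrable _ _),
      intervalIntegral.integral_const_mul, intervalIntegral.integral_const_mul,
      intervalIntegral.integral_sub (hjc.intervalIntegrable _ _) _root_.intervalIntegrable_const]
    simp only [intervalIntegral.integral_const, smul_eq_mul, ← hc]
    ring
end

section
/- Let $(h_n)_{n\ge0}$ be $C^1$ functions of period 1 with unit variance $\int_0^1(h_n - \int_0^1 h_n)^2 = 1$ and $\sup_n \|h_n'\|_\infty = K_1 < \infty$. Let $\gamma_0=1$, $\gamma_{n+1}/\gamma_n \in [\gamma_{\min}, \gamma_{\max}]$ with $\gamma_{\min}>1$, and $R_n = \prod_{k=0}^n r_k$ with $r_0=1$ and integers $r_k \ge \rho_{\min} \ge 2$. Set $H^p(x) = \sum_{n=0}^p \gamma_n h_n(x/R_n)$, an $R_p$-periodic function, and $\mathrm{Var}(H^p) = \frac{1}{R_p}\int_0^{R_p}(H^p - \bar{H^p})^2$. If $\epsilon := 4K_1(\rho_{\min}(\gamma_{\min}-1))^{-1} < 1$, then for all $p \ge 0$: $(1-\epsilon)\sum_{k=0}^p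 \gamma_k^2 \le \mathrm{Var}(H^p) \le (1+\epsilon)\sum_{k=0}^p \gamma_k^2$. -/
/-!
Write `Hᵖ⁺¹ = Hᵖ + v` with `v x = γₚ₊₁ hₚ₊₁ (x / Rₚ₊₁)`. Over the period `Rₚ₊₁ = rₚ₊₁ Rₚ`,
`Var Hᵖ⁺¹ = Var Hᵖ + γₚ₊₁² + 2 Cov(Hᵖ, v)`. The centred fast function `Hᵖ - mean` is
`Rₚ`-periodic with zero mean, while `v` is Lipschitz with constant `γₚ₊₁ K₁ / Rₚ₊₁`; freezing `v`
on each period of `Hᵖ` bounds the covariance by `γₚ₊₁ K₁ / rₚ₊₁` times the mean of `|Hᵖ - mean|`,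
hence (Cauchy–Schwarz) by `γₚ₊₁ K₁ / rₚ₊₁ · √(Var Hᵖ)`. Geometric growth of `γ` gives
`∑_{k ≤ p} γₖ² ≤ γₚ₊₁² / (γmin² - 1)`, so under the induction hypothesis
`√(Var Hᵖ) ≤ 2 γₚ₊₁ / (γmin - 1)` and the cross term is at most `ε γₚ₊₁²`.
-/

open MeasureTheory intervalIntegral

noncomputable def perVar (R : ℝ) (f : ℝ → ℝ) : ℝ :=
  (1 / R) * ∫ x in (0:ℝ)..R, (f x - (1 / R) * ∫ y in (0:ℝ)..R, f y) ^ 2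

open Function

noncomputable def perMean (R : ℝ) (f : ℝ → ℝ) : ℝ :=
  (1 / R) * ∫ x in (0:ℝ)..R, f x

noncomputable def perCov (R : ℝ) (f g : ℝ → ℝ) : ℝ :=
  perMean R fun x => (f x - perMean R f) * (g x - perMean R g)

lemma perVar_eq_perMean (R : ℝ) (f : ℝ → ℝ) :
    perVar R f = perMean R fun x => (f x - perMean R f) ^ 2 := rfl

section perMean

variable {R : ℝ} {f g : ℝ → ℝ}

lemma perMean_add (hf : Continuous f) (hg : Continuous g) :
    perMean R (fun x => f x + g x) = perMean R f + perMean R g := by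
  simp only [perMean, integral_add (hf.intervalIntegrable _ _) (hg.intervalIntegrable _ _), mul_add]

lemma perMean_const_mul (c : ℝ) (f : ℝ → ℝ) :
    perMean R (fun x => c * f x) = c * perMean R f := by
  simp only [perMean, intervalIntegral.integral_const_mul]
  ring

lemma perMean_const (hR : R ≠ 0) (c : ℝ) : perMean R (fun _ => c) = c := by
  simp [perMean, hR]

lemma perMean_nonneg (hR : 0 ≤ R) (hf : ∀ x, 0 ≤ f x) : 0 ≤ perMean R f :=
  mul_nonneg (by positivity) (integral_nonneg hR fun x _ => hf x)

lemma perVar_nonneg (hR : 0 ≤ R) (f : ℝ → ℝ) : 0 ≤ perVar R f :=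
  perMean_nonneg hR fun _ => sq_nonneg _

lemma perVar_eq_perMean_sq_sub (hR : R ≠ 0) (hf : Continuous f) :
    perVar R f = perMean R (fun x => f x ^ 2) - perMean R f ^ 2 := by
  set m := perMean R f
  have hexpand : (fun x => (f x - m) ^ 2) = fun x => f x ^ 2 + ((-2 * m) * f x + m ^ 2) := by
    funext x; ring
  rw [perVar_eq_perMean, hexpand, perMean_add (by fun_prop) (by fun_prop),
    perMean_add (by fun_prop) continuous_const, perMean_const_mul, perMean_const hR]
  ring

lemma sq_perMean_le_perMean_sq (hR : 0 < R) (hf : Continuous f) :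
    perMean R f ^ 2 ≤ perMean R fun x => f x ^ 2 := by
  have := perVar_nonneg hR.le f
  rw [perVar_eq_perMean_sq_sub hR.ne' hf] at this
  linarith

lemma perMean_abs_sub_le_sqrt_perVar (hR : 0 < R) (hf : Continuous f) :
    perMean R (fun x => |f x - perMean R f|) ≤ √(perVar R f) := by
  refine (le_abs_self _).trans (Real.abs_le_sqrt ?_)
  simpa only [perVar_eq_perMean, sq_abs] using
    sq_perMean_le_perMean_sq (f := fun x => |f x - perMean R f|) hR (by fun_prop)

lemma perVar_const_mul (c : ℝ) (f : ℝ → ℝ) :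
    perVar R (fun x => c * f x) = c ^ 2 * perVar R f := by
  simp only [perVar_eq_perMean, perMean_const_mul, ← mul_sub, mul_pow]

lemma perVar_add (hf : Continuous f) (hg : Continuous g) :
    perVar R (fun x => f x + g x) = perVar R f + perVar R g + 2 * perCov R f g := by
  have hexpand : (fun x => (f x + g x - (perMean R f + perMean R g)) ^ 2) = fun x =>
      (f x - perMean R f) ^ 2 + ((g x - perMean R g) ^ 2
        + 2 * ((f x - perMean R f) * (g x - perMean R g))) := by
    funext x; ring
  rw [perVar_eq_perMean, perMean_add hf hg, hexpand, perMean_add (by fun_prop) (by fun_prop),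
    perMean_add (by fun_prop) (by fun_prop), perMean_const_mul]
  simp only [perVar_eq_perMean, perCov, add_assoc]

lemma perMean_comp_div (hR : R ≠ 0) (g : ℝ → ℝ) :
    perMean R (fun x => g (x / R)) = perMean 1 g := by
  simp only [perMean, integral_comp_div g hR, zero_div, div_self hR, smul_eq_mul]
  field_simp

lemma perVar_comp_div (hR : R ≠ 0) (g : ℝ → ℝ) :
    perVar R (fun x => g (x / R)) = perVar 1 g := by
  simp only [perVar_eq_perMean, perMean_comp_div hR g]
  exact perMean_comp_div hR fun y => (g y - perMean 1 g) ^ 2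

end perMean

namespace Function.Periodic

variable {T : ℝ} {f : ℝ → ℝ}

lemma intervalIntegral_nat_mul (hf : Periodic f T) (hcont : Continuous f) (n : ℕ) :
    ∫ x in (0:ℝ)..n * T, f x = n * ∫ x in (0:ℝ)..T, f x := by
  simpa using hf.intervalIntegral_add_zsmul_eq n 0 fun _ _ => hcont.intervalIntegrable _ _

lemma perMean_nat_mul (hf : Periodic f T) (hcont : Continuous f) {n : ℕ} (hn : n ≠ 0) :
    perMean (n * T) f = perMean T f := by
  have hn' : (n : ℝ) ≠ 0 := Nat.cast_ne_zero.mpr hn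
  rw [perMean, perMean, hf.intervalIntegral_nat_mul hcont, one_div, mul_inv,
    mul_mul_mul_comm, inv_mul_cancel₀ hn', one_div, one_mul]

lemma perVar_nat_mul (hf : Periodic f T) (hcont : Continuous f) {n : ℕ} (hn : n ≠ 0) :
    perVar (n * T) f = perVar T f := by
  rw [perVar_eq_perMean, perVar_eq_perMean, hf.perMean_nat_mul hcont hn]
  exact perMean_nat_mul (fun x => by simp only [hf x]) (by fun_prop) hn

end Function.Periodic

lemma abs_intervalIntegral_mul_le_of_integral_eq_zero {f g : ℝ → ℝ} {a T L : ℝ} (hT : 0 ≤ T)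
    (hf : Continuous f) (hg : Continuous g) (hf0 : ∫ x in a..a + T, f x = 0)
    (hLip : ∀ x y, |g x - g y| ≤ L * |x - y|) :
    |∫ x in a..a + T, f x * g x| ≤ L * T * ∫ x in a..a + T, |f x| := by
  have hL : 0 ≤ L := by simpa using (abs_nonneg _).trans (hLip 1 0)
  have haT : a ≤ a + T := by linarith
  -- subtracting the constant `g a` costs nothing because `f` has mean zero
  have hshift : ∫ x in a..a + T, f x * (g x - g a) = ∫ x in a..a + T, f x * g x := by
    simp only [mul_sub]
    rw [integral_sub (f := fun x => f x * g x) (g := fun x => f x * g a)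
      ((hf.mul hg).intervalIntegrable _ _) ((hf.mul continuous_const).intervalIntegrable _ _),
      intervalIntegral.integral_mul_const,
      hf0, zero_mul, sub_zero]
  rw [← hshift, ← intervalIntegral.integral_const_mul]
  refine (abs_integral_le_integral_abs haT).trans (integral_mono_on haT
    ((hf.mul (hg.sub continuous_const)).abs.intervalIntegrable _ _)
    ((continuous_const.mul hf.abs).intervalIntegrable _ _) fun x hx => ?_)
  have hxa : |x - a| ≤ T := by rw [abs_of_nonneg (by linarith [hx.1])]; linarith [hx.2]
  calc |f x * (g x - g a)| = |f x| * |g x - g a| := abs_mul _ _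
    _ ≤ |f x| * (L * T) := by gcongr; exact (hLip x a).trans (by gcongr)
    _ = L * T * |f x| := by ring

lemma Function.Periodic.abs_intervalIntegral_mul_le {f g : ℝ → ℝ} {T L : ℝ} (hf : Periodic f T)
    (hT : 0 ≤ T) (hfc : Continuous f) (hf0 : ∫ x in (0:ℝ)..T, f x = 0) (hg : Continuous g)
    (hLip : ∀ x y, |g x - g y| ≤ L * |x - y|) (n : ℕ) :
    |∫ x in (0:ℝ)..n * T, f x * g x| ≤ L * T * ∫ x in (0:ℝ)..n * T, |f x| := by
  set a : ℕ → ℝ := fun k => k * T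
  have hnext : ∀ k, a (k + 1) = a k + T := fun k => by simp only [a, Nat.cast_succ]; ring
  have hcell : ∀ k, |∫ x in a k..a (k + 1), f x * g x| ≤ L * T * ∫ x in a k..a (k + 1), |f x| := by
    intro k
    rw [hnext]
    refine abs_intervalIntegral_mul_le_of_integral_eq_zero hT hfc hg ?_ hLip
    rw [hf.intervalIntegral_add_eq _ 0, zero_add, hf0]
  have hsum : ∀ F : ℝ → ℝ, Continuous F →
      ∑ k ∈ Finset.range n, ∫ x in a k..a (k + 1), F x = ∫ x in (0:ℝ)..n * T, F x := by
    intro F hF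
    simpa [a] using
      sum_integral_adjacent_intervals fun k _ => hF.intervalIntegrable (a k) (a (k + 1))
  rw [← hsum (fun x => f x * g x) (hfc.mul hg), ← hsum (fun x => |f x|) hfc.abs, Finset.mul_sum]
  exact (Finset.abs_sum_le_sum_abs _ _).trans (Finset.sum_le_sum fun k _ => hcell k)

section TwoScale

variable {u v : ℝ → ℝ} {T L : ℝ} {n : ℕ}

lemma abs_perCov_nat_mul_le (hT : 0 < T) (hn : n ≠ 0) (hu : Continuous u) (hu_per : Periodic u T)
    (hv : Continuous v) (hLip : ∀ x y, |v x - v y| ≤ L * |x - y|) :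
    |perCov (n * T) u v| ≤ L * T * √(perVar T u) := by
  have hL : 0 ≤ L := by simpa using (abs_nonneg _).trans (hLip 1 0)
  have hnT : 0 < n * T := mul_pos (Nat.cast_pos.mpr (Nat.pos_of_ne_zero hn)) hT
  set m := perMean (n * T) u
  have hm : m = perMean T u := hu_per.perMean_nat_mul hu hn
  have hcentred : ∫ x in (0:ℝ)..T, (u x - m) = 0 := by
    rw [integral_sub (hu.intervalIntegrable _ _) intervalIntegrable_const,
      intervalIntegral.integral_const, hm, perMean, smul_eq_mul, sub_zero]
    field_simp
    ring
  have hcentred_per : Periodic (fun x => u x - m) T := fun x => by simp only [hu_per x]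
  have hmix := hcentred_per.abs_intervalIntegral_mul_le (g := fun x => v x - perMean (n * T) v)
    hT.le (hu.sub continuous_const) hcentred (hv.sub continuous_const)
    (fun x y => by simpa only [sub_sub_sub_cancel_right] using hLip x y) n
  calc |perCov (n * T) u v|
      = (1 / (n * T)) * |∫ x in (0:ℝ)..n * T, (u x - m) * (v x - perMean (n * T) v)| := by
        rw [perCov, perMean, abs_mul, abs_of_pos (by positivity)]
    _ ≤ (1 / (n * T)) * (L * T * ∫ x in (0:ℝ)..n * T, |u x - m|) := by gcongr
    _ = L * T * perMean (n * T) (fun x => |u x - m|) := by rw [perMean]; ring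
    _ ≤ L * T * √(perVar T u) := by
        rw [← hu_per.perVar_nat_mul hu hn]
        gcongr
        exact perMean_abs_sub_le_sqrt_perVar hnT hu

lemma abs_perVar_add_sub_le (hT : 0 < T) (hn : n ≠ 0) (hu : Continuous u)
    (hu_per : Periodic u T) (hv : Continuous v) (hLip : ∀ x y, |v x - v y| ≤ L * |x - y|) :
    |perVar (n * T) (fun x => u x + v x) - perVar T u - perVar (n * T) v|
      ≤ 2 * (L * T) * √(perVar T u) := by
  rw [perVar_add hu hv, hu_per.perVar_nat_mul hu hn, add_assoc, add_sub_cancel_left,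
    add_sub_cancel_left, abs_mul, abs_two, mul_assoc]
  gcongr
  exact abs_perCov_nat_mul_le hT hn hu hu_per hv hLip

end TwoScale

section Recursion

variable {γ V : ℕ → ℝ} {q κ : ℝ}

lemma sum_range_sq_mul_le_of_mul_le (hq : 1 ≤ q) (hγ : ∀ n, 0 ≤ γ n)
    (hgrowth : ∀ n, q * γ n ≤ γ (n + 1)) (p : ℕ) :
    (∑ k ∈ Finset.range (p + 1), γ k ^ 2) * (q ^ 2 - 1) ≤ γ (p + 1) ^ 2 := by
  have hsq : ∀ n, q ^ 2 * γ n ^ 2 ≤ γ (n + 1) ^ 2 := fun n => by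
    rw [← mul_pow]
    exact pow_le_pow_left₀ (mul_nonneg (by linarith) (hγ n)) (hgrowth n) 2
  induction p with
  | zero => simp only [zero_add, Finset.sum_range_one]; linarith [hsq 0, sq_nonneg (γ 0)]
  | succ p ih => rw [Finset.sum_range_succ]; linarith [hsq (p + 1)]

lemma sqrt_le_of_le_two_mul_sum (hq : 1 < q) (hγ : ∀ n, 0 ≤ γ n)
    (hgrowth : ∀ n, q * γ n ≤ γ (n + 1)) {p : ℕ} {v : ℝ}
    (hv : v ≤ 2 * ∑ k ∈ Finset.range (p + 1), γ k ^ 2) :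
    √v ≤ 2 * γ (p + 1) / (q - 1) := by
  have hq1 : 0 < q - 1 := by linarith
  have hsum := sum_range_sq_mul_le_of_mul_le hq.le hγ hgrowth p
  have hS : 0 ≤ ∑ k ∈ Finset.range (p + 1), γ k ^ 2 := by positivity
  rw [Real.sqrt_le_left (div_nonneg (by linarith [hγ (p + 1)]) hq1.le), div_pow,
    le_div_iff₀ (by positivity)]
  nlinarith [mul_le_mul_of_nonneg_left (by nlinarith : (q - 1) ^ 2 ≤ q ^ 2 - 1) hS]

theorem sum_sq_bounds_of_abs_succ_sub_le (hq : 1 < q) (hγ : ∀ n, 0 ≤ γ n)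
    (hgrowth : ∀ n, q * γ n ≤ γ (n + 1)) (hκ : 0 ≤ κ) (hε : 4 * κ / (q - 1) ≤ 1)
    (hV0 : V 0 = γ 0 ^ 2)
    (hstep : ∀ p, |V (p + 1) - V p - γ (p + 1) ^ 2| ≤ 2 * γ (p + 1) * κ * √(V p)) (p : ℕ) :
    (1 - 4 * κ / (q - 1)) * ∑ k ∈ Finset.range (p + 1), γ k ^ 2 ≤ V p ∧
      V p ≤ (1 + 4 * κ / (q - 1)) * ∑ k ∈ Finset.range (p + 1), γ k ^ 2 := by
  set ε := 4 * κ / (q - 1)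
  have hq1 : 0 < q - 1 := by linarith
  have hε0 : 0 ≤ ε := by positivity
  induction p with
  | zero =>
    simp only [zero_add, Finset.sum_range_one, hV0]
    constructor <;> nlinarith [sq_nonneg (γ 0)]
  | succ p ih =>
    obtain ⟨ihl, ihr⟩ := ih
    set S := ∑ k ∈ Finset.range (p + 1), γ k ^ 2
    have hS : 0 ≤ S := by positivity
    have hroot : √(V p) ≤ 2 * γ (p + 1) / (q - 1) :=
      sqrt_le_of_le_two_mul_sum hq hγ hgrowth (by nlinarith)
    have hcross : 2 * γ (p + 1) * κ * √(V p) ≤ ε * γ (p + 1) ^ 2 := by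
      calc 2 * γ (p + 1) * κ * √(V p) ≤ 2 * γ (p + 1) * κ * (2 * γ (p + 1) / (q - 1)) := by
            have := hγ (p + 1)
            gcongr
        _ = ε * γ (p + 1) ^ 2 := by simp only [ε]; ring
    rw [Finset.sum_range_succ]
    have := abs_le.mp ((hstep p).trans hcross)
    constructor <;> linarith

end Recursion

lemma abs_sub_le_of_abs_deriv_le {f : ℝ → ℝ} {K : ℝ} (hf : Differentiable ℝ f)
    (hK : ∀ x, |deriv f x| ≤ K) (x y : ℝ) : |f x - f y| ≤ K * |x - y| := by
  simpa only [Real.norm_eq_abs] using Convex.norm_image_sub_le_of_norm_deriv_le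
    (fun z _ => hf z) (fun z _ => (Real.norm_eq_abs _).trans_le (hK z)) convex_univ
    (Set.mem_univ y) (Set.mem_univ x)

noncomputable def multiscaleSum (h : ℕ → ℝ → ℝ) (γ R : ℕ → ℝ) (p : ℕ) (x : ℝ) : ℝ :=
  ∑ n ∈ Finset.range (p + 1), γ n * h n (x / R n)

section Multiscale

variable {h : ℕ → ℝ → ℝ} {γ R : ℕ → ℝ} {r : ℕ → ℕ}

lemma multiscaleSum_zero :
    multiscaleSum h γ R 0 = fun x => γ 0 * h 0 (x / R 0) :=
  funext fun _ => Finset.sum_range_one _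

lemma multiscaleSum_succ (p : ℕ) :
    multiscaleSum h γ R (p + 1) =
      fun x => multiscaleSum h γ R p x + γ (p + 1) * h (p + 1) (x / R (p + 1)) :=
  funext fun _ => Finset.sum_range_succ _ _

lemma continuous_multiscaleSum (hcont : ∀ n, Continuous (h n)) (p : ℕ) :
    Continuous (multiscaleSum h γ R p) := by
  unfold multiscaleSum
  fun_prop

lemma exists_nat_mul_eq_of_le (hRsucc : ∀ n, R (n + 1) = r (n + 1) * R n) {m p : ℕ}
    (hmp : m ≤ p) : ∃ N : ℕ, R p = N * R m := by
  induction p, hmp using Nat.le_induction with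
  | base => exact ⟨1, by simp⟩
  | succ p _ ih =>
    obtain ⟨N, hN⟩ := ih
    exact ⟨r (p + 1) * N, by rw [hRsucc, hN]; push_cast; ring⟩

lemma periodic_multiscaleSum (hper : ∀ n, Periodic (h n) 1)
    (hRsucc : ∀ n, R (n + 1) = r (n + 1) * R n) (p : ℕ) :
    Periodic (multiscaleSum h γ R p) (R p) := by
  intro x
  refine Finset.sum_congr rfl fun n hn => ?_
  obtain ⟨N, hN⟩ := exists_nat_mul_eq_of_le hRsucc (Nat.lt_succ_iff.mp (Finset.mem_range.mp hn))
  rw [hN]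
  congr 1
  simpa only [one_mul] using ((hper n).div_const (R n)).nat_mul N x

lemma abs_perVar_multiscaleSum_succ_sub_le {K : ℝ} (hcont : ∀ n, Continuous (h n))
    (hper : ∀ n, Periodic (h n) 1) (hvar : ∀ n, perVar 1 (h n) = 1)
    (hLip : ∀ n x y, |h n x - h n y| ≤ K * |x - y|) (hγ : ∀ n, 0 ≤ γ n) (hRpos : ∀ n, 0 < R n)
    (hRsucc : ∀ n, R (n + 1) = r (n + 1) * R n) (p : ℕ) :
    |perVar (R (p + 1)) (multiscaleSum h γ R (p + 1)) - perVar (R p) (multiscaleSum h γ R p)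
        - γ (p + 1) ^ 2|
      ≤ 2 * γ (p + 1) * (K / r (p + 1)) * √(perVar (R p) (multiscaleSum h γ R p)) := by
  have hr : r (p + 1) ≠ 0 := by
    rintro hr0
    simpa [hRsucc, hr0] using hRpos (p + 1)
  have hvvar :
      perVar (R (p + 1)) (fun x => γ (p + 1) * h (p + 1) (x / R (p + 1))) = γ (p + 1) ^ 2 := by
    rw [perVar_comp_div (hRpos _).ne' fun y => γ (p + 1) * h (p + 1) y, perVar_const_mul, hvar,
      mul_one]
  have hvLip : ∀ x y,
      |γ (p + 1) * h (p + 1) (x / R (p + 1)) - γ (p + 1) * h (p + 1) (y / R (p + 1))|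
        ≤ γ (p + 1) * K / R (p + 1) * |x - y| := fun x y => by
    rw [← mul_sub, abs_mul, abs_of_nonneg (hγ _), mul_div_assoc, mul_assoc]
    refine mul_le_mul_of_nonneg_left ?_ (hγ _)
    calc |h (p + 1) (x / R (p + 1)) - h (p + 1) (y / R (p + 1))|
        ≤ K * |x / R (p + 1) - y / R (p + 1)| := hLip _ _ _
      _ = K / R (p + 1) * |x - y| := by
        rw [← sub_div, abs_div, abs_of_pos (hRpos _)]; ring
  have key := abs_perVar_add_sub_le (hRpos p) hr (continuous_multiscaleSum (γ := γ) hcont p)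
    (periodic_multiscaleSum hper hRsucc p) (by fun_prop) hvLip
  have hconst : γ (p + 1) * K / R (p + 1) * R p = γ (p + 1) * (K / r (p + 1)) := by
    rw [hRsucc]
    field_simp [(hRpos p).ne']
  rw [← hRsucc, ← multiscaleSum_succ, hvvar, hconst] at key
  exact key.trans_eq (by ring)

end Multiscale

theorem multiscale_variance_general (h_n : ℕ → ℝ → ℝ) (γ : ℕ → ℝ) (r : ℕ → ℕ) (R : ℕ → ℝ)
    (γmin γmax ρmin K₁ : ℝ)
    (hC1 : ∀ n, ContDiff ℝ 1 (h_n n)) (hper : ∀ n, Function.Periodic (h_n n) 1)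
    (hvar : ∀ n, perVar 1 (h_n n) = 1) (hK₁ : ∀ n x, |deriv (h_n n) x| ≤ K₁)
    (hγpos : ∀ n, 0 < γ n) (hγmin : 1 < γmin)
    (hratio : ∀ n, γmin ≤ γ (n + 1) / γ n ∧ γ (n + 1) / γ n ≤ γmax)
    (hr0 : r 0 = 1) (hρ : 2 ≤ ρmin) (hrk : ∀ k, 1 ≤ k → ρmin ≤ (r k : ℝ))
    (hR : ∀ n, R n = ∏ k ∈ Finset.range (n + 1), (r k : ℝ))
    (hε : 4 * K₁ * (ρmin * (γmin - 1))⁻¹ < 1) :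
    ∀ p, (1 - 4 * K₁ * (ρmin * (γmin - 1))⁻¹) * ∑ k ∈ Finset.range (p + 1), γ k ^ 2
          ≤ perVar (R p) (fun x => ∑ n ∈ Finset.range (p + 1), γ n * h_n n (x / R n)) ∧
        perVar (R p) (fun x => ∑ n ∈ Finset.range (p + 1), γ n * h_n n (x / R n))
          ≤ (1 + 4 * K₁ * (ρmin * (γmin - 1))⁻¹) * ∑ k ∈ Finset.range (p + 1), γ k ^ 2 := by
  have hK : 0 ≤ K₁ := (abs_nonneg _).trans (hK₁ 0 0)
  have hρr : ∀ n, ρmin ≤ r (n + 1) := fun n => hrk (n + 1) n.succ_pos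
  have hRsucc : ∀ n, R (n + 1) = r (n + 1) * R n := fun n => by
    rw [hR, hR, Finset.prod_range_succ, mul_comm]
  have hRpos : ∀ n, 0 < R n := fun n => by
    induction n with
    | zero => simp [hR, hr0]
    | succ n ih => rw [hRsucc]; exact mul_pos (by linarith [hρr n]) ih
  have hgrowth : ∀ n, γmin * γ n ≤ γ (n + 1) := fun n => (le_div_iff₀ (hγpos n)).mp (hratio n).1
  have hε' : 4 * (K₁ / ρmin) / (γmin - 1) = 4 * K₁ * (ρmin * (γmin - 1))⁻¹ := by
    rw [mul_inv]; ring
  have hV0 : perVar (R 0) (multiscaleSum h_n γ R 0) = γ 0 ^ 2 := by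
    rw [multiscaleSum_zero, perVar_comp_div (hRpos 0).ne' fun y => γ 0 * h_n 0 y,
      perVar_const_mul, hvar, mul_one]
  have hstep : ∀ p, |perVar (R (p + 1)) (multiscaleSum h_n γ R (p + 1))
      - perVar (R p) (multiscaleSum h_n γ R p) - γ (p + 1) ^ 2|
      ≤ 2 * γ (p + 1) * (K₁ / ρmin) * √(perVar (R p) (multiscaleSum h_n γ R p)) := fun p => by
    refine (abs_perVar_multiscaleSum_succ_sub_le (fun n => (hC1 n).continuous) hper hvar
      (fun n => abs_sub_le_of_abs_deriv_le ((hC1 n).differentiable one_ne_zero) (hK₁ n))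
      (fun n => (hγpos n).le) hRpos hRsucc p).trans ?_
    have := hγpos (p + 1)
    gcongr
    exact hρr p
  rw [← hε']
  exact sum_sq_bounds_of_abs_succ_sub_le hγmin (fun n => (hγpos n).le) hgrowth
    (div_nonneg hK (by linarith)) (hε' ▸ hε.le) hV0 hstep

/-- Theorem 2 of the paper: multi-scale variance bounds
`(1-ε) ∑ γₖ² ≤ Var(Hᵖ) ≤ (1+ε) ∑ γₖ²` with `ε = 4K₁(ρmin(γmin-1))⁻¹ < 1`. -/
theorem multiscale_variance (h_n : ℕ → ℝ → ℝ) (γ : ℕ → ℝ) (r : ℕ → ℕ) (R : ℕ → ℝ)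
    (γmin γmax ρmin K₁ : ℝ)
    (hC1 : ∀ n, ContDiff ℝ 1 (h_n n)) (hper : ∀ n, Function.Periodic (h_n n) 1)
    (hvar : ∀ n, perVar 1 (h_n n) = 1) (hK₁ : ∀ n x, |deriv (h_n n) x| ≤ K₁)
    (hγ0 : γ 0 = 1) (hγpos : ∀ n, 0 < γ n) (hγmin : 1 < γmin)
    (hratio : ∀ n, γmin ≤ γ (n + 1) / γ n ∧ γ (n + 1) / γ n ≤ γmax)
    (hr0 : r 0 = 1) (hρ : 2 ≤ ρmin) (hrk : ∀ k, 1 ≤ k → ρmin ≤ (r k : ℝ))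
    (hR : ∀ n, R n = ∏ k ∈ Finset.range (n + 1), (r k : ℝ))
    (hε : 4 * K₁ * (ρmin * (γmin - 1))⁻¹ < 1) :
    ∀ p, (1 - 4 * K₁ * (ρmin * (γmin - 1))⁻¹) * ∑ k ∈ Finset.range (p + 1), γ k ^ 2
          ≤ perVar (R p) (fun x => ∑ n ∈ Finset.range (p + 1), γ n * h_n n (x / R n)) ∧
        perVar (R p) (fun x => ∑ n ∈ Finset.range (p + 1), γ n * h_n n (x / R n))
          ≤ (1 + 4 * K₁ * (ρmin * (γmin - 1))⁻¹) * ∑ k ∈ Finset.range (p + 1), γ k ^ 2 :=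
  multiscale_variance_general h_n γ r R γmin γmax ρmin K₁ hC1 hper hvar hK₁ hγpos hγmin hratio hr0
    hρ hrk hR hε
end
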